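/- Let Γ = {(r, A(r)) : r ∈ ℝ^d} ⊂ ℝⁿ be a d-dimensional Lipschitz graph with surface measure μ, and SΓ(x,t) = ∫_Γ ψ_t(x - y) dμ(y) with ψ_t(x) = t ∂_t K_t(x), K_t(x) = t^{-d/2} e^{-π|x|²/t}. Then for every k ≥ 0 there is a constant C_k depending only on k and d such that sup_{x ∈ Γ} |∂_t^k SΓ(x,t)| ≤ (C_k / t^k) · ‖Γ‖_*, where ‖Γ‖_* = sup_r √(det(g_{ij}(r))) with g_{ij} = ⟨∂z/∂r_i, ∂z/∂r_j⟩ for the parametrization z(r) = (r, A(r)). -/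

import Mathlib

/-!
The time derivatives of the heat kernel all have the shape `s ^ b * p (a / s) * exp (-π a / s)`
with `a = ‖x‖²` and `p` a polynomial, and `d/ds` maps this family into itself, lowering `b` by
one; `ψ_s` is the member with `b = -d/2`. Since `|p u| e^{-πu} ≤ C e^{-2u}` for `u ≥ 0`, and
`‖x₀ - z r‖ ≥ ‖r - r₀‖` on the graph, each member is dominated by `C s^b e^{-2‖r - r₀‖²/s}`.
This Gaussian domination justifies differentiating under the integral `k` times, and integrating
the Gaussian over `ℝᵈ` contributes `s^{d/2}`, which turns `s^{-d/2-k}` into `s^{-k}`.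
-/

open MeasureTheory Real
open scoped RealInnerProductSpace

/-- The ambient Euclidean space `ℝᵈ × ℝ^{n-d}` with the ℓ² (Euclidean) norm. -/
abbrev Amb (d m : ℕ) := WithLp 2 (EuclideanSpace ℝ (Fin d) × EuclideanSpace ℝ (Fin m))

/-- The graph parametrization `z(r) = (r, A(r))`. -/
noncomputable def z {d m : ℕ} (A : EuclideanSpace ℝ (Fin d) → EuclideanSpace ℝ (Fin m))
    (r : EuclideanSpace ℝ (Fin d)) : Amb d m :=
  (WithLp.equiv 2 (EuclideanSpace ℝ (Fin d) × EuclideanSpace ℝ (Fin m))).symm (r, A r)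

noncomputable def KG (d m : ℕ) (t : ℝ) (x : Amb d m) : ℝ :=
  t ^ (-(d : ℝ) / 2) * Real.exp (-π * ‖x‖ ^ 2 / t)

noncomputable def psiG (d m : ℕ) (t : ℝ) (x : Amb d m) : ℝ :=
  t * deriv (fun s => KG d m s x) t

/-- The surface-measure Jacobian `‖z'(r)‖ = √det(gᵢⱼ)`,
`gᵢⱼ = ⟪∂z/∂rᵢ, ∂z/∂rⱼ⟫`. -/
noncomputable def Jdet {d m : ℕ} (A : EuclideanSpace ℝ (Fin d) → EuclideanSpace ℝ (Fin m))
    (r : EuclideanSpace ℝ (Fin d)) : ℝ :=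
  Real.sqrt (Matrix.det (Matrix.of fun i j : Fin d =>
    (⟪fderiv ℝ (z A) r (EuclideanSpace.single i 1),
       fderiv ℝ (z A) r (EuclideanSpace.single j 1)⟫ : ℝ)))

open Polynomial Topology

noncomputable def heatProfile (p : ℝ[X]) (b a s : ℝ) : ℝ :=
  s ^ b * p.eval (a / s) * exp (-π * a / s)

noncomputable def heatProfileDerivPoly (p : ℝ[X]) (b : ℝ) : ℝ[X] :=
  C b * p - X * derivative p + C π * X * p

noncomputable def heatProfileIterPoly (p : ℝ[X]) (b : ℝ) : ℕ → ℝ[X]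
  | 0 => p
  | j + 1 => heatProfileDerivPoly (heatProfileIterPoly p b j) (b - j)

lemma mul_heatProfile_sub_one (p : ℝ[X]) (b a : ℝ) {s : ℝ} (hs : 0 < s) :
    s * heatProfile p (b - 1) a s = heatProfile p b a s := by
  simp only [heatProfile, rpow_sub_one hs.ne']
  field_simp

lemma hasDerivAt_heatProfile (p : ℝ[X]) (b a : ℝ) {s : ℝ} (hs : 0 < s) :
    HasDerivAt (heatProfile p b a) (heatProfile (heatProfileDerivPoly p b) (b - 1) a s) s := by
  have hinv : HasDerivAt (fun s : ℝ => a / s) (-(a / s ^ 2)) s := by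
    simpa [div_eq_mul_inv] using (hasDerivAt_inv hs.ne').const_mul a
  have hexp : HasDerivAt (fun s : ℝ => -π * a / s) (π * a / s ^ 2) s := by
    have h := hinv.const_mul (-π)
    simp only [mul_div_assoc'] at h
    exact h.congr_deriv (by ring)
  have H := ((hasDerivAt_rpow_const (p := b) (Or.inl hs.ne')).mul
    ((p.hasDerivAt (a / s)).comp s hinv)).mul hexp.exp
  refine H.congr_deriv ?_
  simp only [heatProfile, heatProfileDerivPoly, eval_add, eval_sub, eval_mul, eval_C, eval_X,
    Function.comp_apply, Pi.mul_apply, rpow_sub_one hs.ne']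
  field_simp
  ring

noncomputable def factorialCoeffSum (p : ℝ[X]) : ℝ :=
  ∑ i ∈ Finset.range (p.natDegree + 1), |p.coeff i| * i.factorial

lemma factorialCoeffSum_nonneg (p : ℝ[X]) : 0 ≤ factorialCoeffSum p :=
  Finset.sum_nonneg fun _ _ => by positivity

lemma abs_eval_le_factorialCoeffSum_mul_exp (p : ℝ[X]) {u : ℝ} (hu : 0 ≤ u) :
    |p.eval u| ≤ factorialCoeffSum p * exp u := by
  rw [eval_eq_sum_range, factorialCoeffSum, Finset.sum_mul]
  refine (Finset.abs_sum_le_sum_abs _ _).trans (Finset.sum_le_sum fun i _ => ?_)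
  rw [abs_mul, abs_pow, abs_of_nonneg hu, mul_assoc]
  gcongr
  rw [← div_le_iff₀' (by positivity)]
  exact pow_div_factorial_le_exp _ hu i

lemma abs_heatProfile_le (p : ℝ[X]) (b : ℝ) {a s : ℝ} (ha : 0 ≤ a) (hs : 0 < s) :
    |heatProfile p b a s| ≤ factorialCoeffSum p * s ^ b * exp (-2 * a / s) := by
  have hu : 0 ≤ a / s := div_nonneg ha hs.le
  have hS := factorialCoeffSum_nonneg p
  have hexp : exp (a / s) * exp (-π * a / s) ≤ exp (-2 * a / s) := by
    rw [← exp_add, exp_le_exp, mul_div_assoc, mul_div_assoc]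
    nlinarith [pi_gt_three]
  rw [heatProfile, abs_mul, abs_mul, abs_of_pos (rpow_pos_of_pos hs b), abs_exp]
  calc s ^ b * |p.eval (a / s)| * exp (-π * a / s)
      ≤ s ^ b * (factorialCoeffSum p * exp (a / s)) * exp (-π * a / s) := by
        gcongr; exact abs_eval_le_factorialCoeffSum_mul_exp p hu
    _ = factorialCoeffSum p * s ^ b * (exp (a / s) * exp (-π * a / s)) := by ring
    _ ≤ factorialCoeffSum p * s ^ b * exp (-2 * a / s) := by gcongr

lemma abs_heatProfile_mul_le {a ρ w M : ℝ} (ha : ρ ^ 2 ≤ a) (hw : |w| ≤ M)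
    (p : ℝ[X]) (b : ℝ) {s : ℝ} (hs : 0 < s) :
    |heatProfile p b a s * w|
      ≤ factorialCoeffSum p * s ^ b * M * exp (-(2 / s) * ρ ^ 2) := by
  have hexp : exp (-2 * a / s) ≤ exp (-(2 / s) * ρ ^ 2) := by
    rw [exp_le_exp, show -2 * a / s = -(2 / s) * a by ring]
    exact mul_le_mul_of_nonpos_left ha (by have := div_pos two_pos hs; linarith)
  have hS := factorialCoeffSum_nonneg p
  rw [abs_mul]
  calc |heatProfile p b a s| * |w|
      ≤ factorialCoeffSum p * s ^ b * exp (-2 * a / s) * M :=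
        mul_le_mul (abs_heatProfile_le p b ((sq_nonneg _).trans ha) hs) hw
          (abs_nonneg _) (by positivity)
    _ ≤ factorialCoeffSum p * s ^ b * exp (-(2 / s) * ρ ^ 2) * M := by
        gcongr; exact (abs_nonneg _).trans hw
    _ = factorialCoeffSum p * s ^ b * M * exp (-(2 / s) * ρ ^ 2) := by ring

section GaussianDomination

variable {V : Type*} [NormedAddCommGroup V] [InnerProductSpace ℝ V] [FiniteDimensional ℝ V]
  [MeasurableSpace V] [BorelSpace V]

lemma integral_exp_neg_mul_norm_sub_sq {c : ℝ} (hc : 0 < c) (r₀ : V) :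
    ∫ r : V, exp (-c * ‖r - r₀‖ ^ 2) = (π / c) ^ (Module.finrank ℝ V / 2 : ℝ) := by
  rw [integral_sub_right_eq_self (fun v : V => exp (-c * ‖v‖ ^ 2)) r₀,
    GaussianFourier.integral_rexp_neg_mul_sq_norm hc]

lemma integrable_exp_neg_mul_norm_sub_sq {c : ℝ} (hc : 0 < c) (r₀ : V) :
    Integrable fun r : V => exp (-c * ‖r - r₀‖ ^ 2) :=
  Integrable.of_integral_ne_zero <| by
    rw [integral_exp_neg_mul_norm_sub_sq hc]; positivity

variable {a w : V → ℝ} {r₀ : V} {M : ℝ}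

lemma continuous_heatProfile (p : ℝ[X]) (b s : ℝ) :
    Continuous fun a => heatProfile p b a s := by
  unfold heatProfile; fun_prop

lemma aestronglyMeasurable_heatProfile_mul (ha_meas : Measurable a)
    (hw_meas : AEStronglyMeasurable w) (p : ℝ[X]) (b s : ℝ) :
    AEStronglyMeasurable fun r => heatProfile p b (a r) s * w r :=
  ((continuous_heatProfile p b s).measurable.comp ha_meas).aestronglyMeasurable.mul hw_meas

lemma integrable_heatProfile_mul (ha_meas : Measurable a) (ha : ∀ r, ‖r - r₀‖ ^ 2 ≤ a r)
    (hw_meas : AEStronglyMeasurable w) (hw : ∀ r, |w r| ≤ M) (p : ℝ[X]) (b : ℝ) {s : ℝ}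
    (hs : 0 < s) : Integrable fun r => heatProfile p b (a r) s * w r :=
  ((integrable_exp_neg_mul_norm_sub_sq (div_pos two_pos hs) r₀).const_mul _).mono'
    (aestronglyMeasurable_heatProfile_mul ha_meas hw_meas p b s)
    (.of_forall fun r => abs_heatProfile_mul_le (ha r) (hw r) p b hs)

lemma hasDerivAt_integral_heatProfile_mul (ha_meas : Measurable a)
    (ha : ∀ r, ‖r - r₀‖ ^ 2 ≤ a r) (hw_meas : AEStronglyMeasurable w) (hw : ∀ r, |w r| ≤ M)
    (p : ℝ[X]) {b : ℝ} (hb : b ≤ 0) {s : ℝ} (hs : 0 < s) :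
    HasDerivAt (fun s => ∫ r, heatProfile p b (a r) s * w r)
      (∫ r, heatProfile (heatProfileDerivPoly p b) (b - 1) (a r) s * w r) s := by
  set q := heatProfileDerivPoly p b
  -- on `(s/2, 2s)` the derivative is dominated by a single Gaussian, since `2/s' > 1/s` there
  have h_bound : ∀ r, ∀ s' ∈ Set.Ioo (s / 2) (2 * s),
      ‖heatProfile q (b - 1) (a r) s' * w r‖
        ≤ factorialCoeffSum q * (s / 2) ^ (b - 1) * M * exp (-(1 / s) * ‖r - r₀‖ ^ 2) := by
    rintro r s' ⟨hs₁, hs₂⟩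
    have hs' : 0 < s' := (half_pos hs).trans hs₁
    have hc : 1 / s ≤ 2 / s' := by rw [div_le_div_iff₀ hs hs']; linarith
    have h_pow : s' ^ (b - 1) ≤ (s / 2) ^ (b - 1) :=
      rpow_le_rpow_of_nonpos (half_pos hs) hs₁.le (by linarith)
    have h_exp : exp (-(2 / s') * ‖r - r₀‖ ^ 2) ≤ exp (-(1 / s) * ‖r - r₀‖ ^ 2) :=
      exp_le_exp.2 (by nlinarith [sq_nonneg ‖r - r₀‖])
    have hq := factorialCoeffSum_nonneg q
    have hM : 0 ≤ M := (abs_nonneg _).trans (hw r)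
    refine (abs_heatProfile_mul_le (ha r) (hw r) q (b - 1) hs').trans ?_
    gcongr
  exact (hasDerivAt_integral_of_dominated_loc_of_deriv_le
    (Ioo_mem_nhds (half_lt_self hs) (by linarith))
    (.of_forall fun s' => aestronglyMeasurable_heatProfile_mul ha_meas hw_meas p b s')
    (integrable_heatProfile_mul ha_meas ha hw_meas hw p b hs)
    (aestronglyMeasurable_heatProfile_mul ha_meas hw_meas q (b - 1) s)
    (.of_forall h_bound)
    ((integrable_exp_neg_mul_norm_sub_sq (one_div_pos.2 hs) r₀).const_mul _)
    (.of_forall fun r s' hs' =>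
      (hasDerivAt_heatProfile p b (a r) ((half_pos hs).trans hs'.1)).mul_const (w r))).2

lemma iteratedDeriv_integral_heatProfile_mul (ha_meas : Measurable a)
    (ha : ∀ r, ‖r - r₀‖ ^ 2 ≤ a r) (hw_meas : AEStronglyMeasurable w) (hw : ∀ r, |w r| ≤ M)
    (p : ℝ[X]) {b : ℝ} (hb : b ≤ 0) (j : ℕ) {s : ℝ} (hs : 0 < s) :
    iteratedDeriv j (fun s => ∫ r, heatProfile p b (a r) s * w r) s
      = ∫ r, heatProfile (heatProfileIterPoly p b j) (b - j) (a r) s * w r := by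
  induction j generalizing s with
  | zero => simp [heatProfileIterPoly]
  | succ j ih =>
    have h_eq : iteratedDeriv j (fun s => ∫ r, heatProfile p b (a r) s * w r)
        =ᶠ[𝓝 s] fun s => ∫ r, heatProfile (heatProfileIterPoly p b j) (b - j) (a r) s * w r := by
      filter_upwards [Ioi_mem_nhds hs] with s' hs' using ih hs'
    have hbj : b - j ≤ 0 := by linarith [(Nat.cast_nonneg j : (0 : ℝ) ≤ j)]
    rw [iteratedDeriv_succ, h_eq.deriv_eq,
      (hasDerivAt_integral_heatProfile_mul ha_meas ha hw_meas hw _ hbj hs).deriv]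
    simp only [heatProfileIterPoly, Nat.cast_succ, sub_add_eq_sub_sub]

lemma abs_integral_heatProfile_mul_le (ha : ∀ r, ‖r - r₀‖ ^ 2 ≤ a r) (hw : ∀ r, |w r| ≤ M)
    (p : ℝ[X]) (b : ℝ) {s : ℝ} (hs : 0 < s) :
    |∫ r, heatProfile p b (a r) s * w r|
      ≤ factorialCoeffSum p * (π / 2) ^ (Module.finrank ℝ V / 2 : ℝ)
          * s ^ (b + Module.finrank ℝ V / 2) * M := by
  have hc : 0 < 2 / s := div_pos two_pos hs
  have h_bound : ∀ r, ‖heatProfile p b (a r) s * w r‖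
      ≤ factorialCoeffSum p * s ^ b * M * exp (-(2 / s) * ‖r - r₀‖ ^ 2) :=
    fun r => abs_heatProfile_mul_le (ha r) (hw r) p b hs
  refine (norm_integral_le_of_norm_le ((integrable_exp_neg_mul_norm_sub_sq hc r₀).const_mul _)
    (.of_forall h_bound)).trans_eq ?_
  rw [integral_const_mul, integral_exp_neg_mul_norm_sub_sq hc,
    show π / (2 / s) = π / 2 * s by field_simp, mul_rpow (by positivity) hs.le, rpow_add hs]
  ring

end GaussianDomination

lemma KG_eq_heatProfile (d m : ℕ) (x : Amb d m) :
    (fun s => KG d m s x) = heatProfile 1 (-(d : ℝ) / 2) (‖x‖ ^ 2) := by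
  ext s; simp [KG, heatProfile]

lemma psiG_eq_heatProfile (d m : ℕ) {t : ℝ} (ht : 0 < t) (x : Amb d m) :
    psiG d m t x
      = heatProfile (heatProfileDerivPoly 1 (-(d : ℝ) / 2)) (-(d : ℝ) / 2) (‖x‖ ^ 2) t := by
  rw [psiG, KG_eq_heatProfile, (hasDerivAt_heatProfile _ _ _ ht).deriv,
    mul_heatProfile_sub_one _ _ _ ht]

section Graph

variable {d m : ℕ} {A : EuclideanSpace ℝ (Fin d) → EuclideanSpace ℝ (Fin m)}

lemma continuous_z (hA : Continuous A) : Continuous (z A) :=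
  (WithLp.prodContinuousLinearEquiv 2 ℝ _ _).symm.continuous.comp (continuous_id.prodMk hA)

lemma norm_sub_sq_le_norm_z_sub_sq (r₀ r : EuclideanSpace ℝ (Fin d)) :
    ‖r - r₀‖ ^ 2 ≤ ‖z A r₀ - z A r‖ ^ 2 := by
  rw [norm_sub_rev (z A r₀)]
  gcongr
  exact WithLp.norm_fst_le _ (z A r - z A r₀)

lemma measurable_Jdet : Measurable (Jdet A) := by
  have hD : ∀ v, Measurable fun r => fderiv ℝ (z A) r v := fun v =>
    (ContinuousLinearMap.apply ℝ (Amb d m) v).continuous.measurable.comp (measurable_fderiv ℝ (z A))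
  unfold Jdet
  simp only [Matrix.det_apply, Matrix.of_apply]
  refine continuous_sqrt.measurable.comp (Finset.measurable_sum _ fun σ _ => ?_)
  exact (Finset.measurable_prod _ fun i _ => (hD _).inner (hD _)).const_smul _

end Graph

/-- For a `d`-dimensional Lipschitz graph `Γ = {(r, A(r))}` with surface measure,
`sup_{x ∈ Γ} |∂ₜᵏ SΓ(x,t)| ≤ (Cₖ/tᵏ) ‖Γ‖_*`, where `Cₖ` depends only on `k`
and `d`, and `‖Γ‖_*` is any bound for `sup_r √det(gᵢⱼ(r))`. -/
theorem stmt_14 (d k : ℕ) :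
    ∃ C : ℝ, ∀ (m : ℕ) (L : NNReal)
      (A : EuclideanSpace ℝ (Fin d) → EuclideanSpace ℝ (Fin m)),
      LipschitzWith L A →
      ∀ M : ℝ, (∀ r, Jdet A r ≤ M) →
      ∀ x₀ ∈ Set.range (z A), ∀ t : ℝ, 0 < t →
        |iteratedDeriv k
            (fun s => ∫ r : EuclideanSpace ℝ (Fin d), psiG d m s (x₀ - z A r) * Jdet A r) t|
          ≤ C / t ^ k * M := by
  set p₀ := heatProfileDerivPoly 1 (-(d : ℝ) / 2)
  refine ⟨factorialCoeffSum (heatProfileIterPoly p₀ (-(d : ℝ) / 2) k) * (π / 2) ^ ((d : ℝ) / 2), ?_⟩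
  rintro m L A hA M hM _ ⟨r₀, rfl⟩ t ht
  have hb : -(d : ℝ) / 2 ≤ 0 := by linarith [(Nat.cast_nonneg d : (0 : ℝ) ≤ d)]
  have ha := norm_sub_sq_le_norm_z_sub_sq (A := A) r₀
  have ha_meas : Measurable fun r => ‖z A r₀ - z A r‖ ^ 2 :=
    ((continuous_const.sub (continuous_z hA.continuous)).norm.pow 2).measurable
  have hw : ∀ r, |Jdet A r| ≤ M := fun r => (abs_of_nonneg (sqrt_nonneg _)).trans_le (hM r)
  have h_psi : (fun s => ∫ r, psiG d m s (z A r₀ - z A r) * Jdet A r)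
      =ᶠ[𝓝 t] fun s => ∫ r, heatProfile p₀ (-(d : ℝ) / 2) (‖z A r₀ - z A r‖ ^ 2) s * Jdet A r := by
    filter_upwards [Ioi_mem_nhds ht] with s hs
    simp_rw [psiG_eq_heatProfile d m hs, p₀]
  rw [(h_psi.iteratedDeriv k).eq_of_nhds, iteratedDeriv_integral_heatProfile_mul ha_meas ha
    measurable_Jdet.aestronglyMeasurable hw p₀ hb k ht]
  refine (abs_integral_heatProfile_mul_le ha hw _ _ ht).trans_eq ?_
  rw [finrank_euclideanSpace_fin, show -(d : ℝ) / 2 - k + d / 2 = -k by ring, rpow_neg ht.le,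
    rpow_natCast]
  ring
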